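/- Let R₁ > 0 and let μ be a Borel probability measure on ℝ^d supported in the closed ball B̄(R₁). Then the map z ↦ γ(z, μ) is Fréchet differentiable at every z ∈ B̄(R₁), and for all z, z̃ ∈ B̄(R₁) one has ‖γ(z, μ) − γ(z̃, μ)‖ ≤ 2 R₁² ‖z − z̃‖. -/

import Mathlib

/-!
Write `γ = γ₂⁻¹ • N` with `N(z) = ∫ exp⟨z,y⟩ • y dμ(y)`. Both `N` and `γ₂` may be differentiated
under the integral sign, and their derivatives are again exponentially tilted integrals, of
`y ↦ ⟨y, ·⟩ y` and `y ↦ ⟨y, ·⟩`, whose integrands are bounded by `R²` and `R` on the support.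
Since also `‖N(z)‖ ≤ R γ₂(z)`, the quotient rule gives
`‖Dγ(z)‖ ≤ ‖DN(z)‖ / γ₂(z) + ‖Dγ₂(z)‖ ‖N(z)‖ / γ₂(z)² ≤ R² + R · R`,
and the mean value inequality on the convex ball turns this into the Lipschitz bound.
-/

open MeasureTheory
open scoped RealInnerProductSpace

/-- The normalisation constant `γ₂(z, μ) = ∫ exp⟨z,y⟩ dμ(y)`. -/
noncomputable def gamma2 {d : ℕ} (z : EuclideanSpace ℝ (Fin d))
    (μ : Measure (EuclideanSpace ℝ (Fin d))) : ℝ :=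
  ∫ y, Real.exp ⟪z, y⟫ ∂μ

/-- The attention map `γ(z, μ) = (∫ exp⟨z,y⟩ • y dμ(y)) / γ₂(z, μ)`. -/
noncomputable def gammaAttn {d : ℕ} (z : EuclideanSpace ℝ (Fin d))
    (μ : Measure (EuclideanSpace ℝ (Fin d))) : EuclideanSpace ℝ (Fin d) :=
  (gamma2 z μ)⁻¹ • ∫ y, Real.exp ⟪z, y⟫ • y ∂μ

open Real Metric

theorem HasFDerivAt.exists_inv_smul_norm_le {E F : Type*} [NormedAddCommGroup E] [NormedSpace ℝ E]
    [NormedAddCommGroup F] [NormedSpace ℝ F] {D : E → ℝ} {N : E → F} {D' : E →L[ℝ] ℝ}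
    {N' : E →L[ℝ] F} {z : E} {a b c : ℝ} (hD : HasFDerivAt D D' z) (hN : HasFDerivAt N N' z)
    (hpos : 0 < D z) (hD' : ‖D'‖ ≤ b * D z) (hN' : ‖N'‖ ≤ a * D z) (hNz : ‖N z‖ ≤ c * D z) :
    ∃ L : E →L[ℝ] F, HasFDerivAt (fun w => (D w)⁻¹ • N w) L z ∧ ‖L‖ ≤ a + b * c := by
  refine ⟨_, ((hasDerivAt_inv hpos.ne').comp_hasFDerivAt z hD).smul hN, ?_⟩
  calc _ ≤ ‖(D z)⁻¹ • N'‖ + ‖(-(D z ^ 2)⁻¹ • D').smulRight (N z)‖ := norm_add_le _ _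
    _ = (D z)⁻¹ * ‖N'‖ + (D z ^ 2)⁻¹ * ‖D'‖ * ‖N z‖ := by
      rw [ContinuousLinearMap.norm_smulRight_apply, norm_smul, norm_smul, norm_neg, norm_inv,
        norm_inv, Real.norm_of_nonneg hpos.le, Real.norm_of_nonneg (by positivity)]
    _ ≤ (D z)⁻¹ * (a * D z) + (D z ^ 2)⁻¹ * (b * D z) * (c * D z) := by
      have : 0 ≤ b * D z := (norm_nonneg _).trans hD'
      gcongr
    _ = a + b * c := by field_simp

section ExpTilt

variable {E F : Type*} [NormedAddCommGroup E] [InnerProductSpace ℝ E] [NormedAddCommGroup F]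
  [NormedSpace ℝ F] {R C : ℝ}

theorem exp_inner_le_of_norm_le {y : E} (hy : ‖y‖ ≤ R) (x : E) :
    exp ⟪x, y⟫ ≤ exp (‖x‖ * R) :=
  exp_le_exp.2 ((real_inner_le_norm x y).trans (by gcongr))

theorem integrable_exp_inner [MeasurableSpace E] [OpensMeasurableSpace E]
    {μ : Measure E} [IsFiniteMeasure μ] (hμ : ∀ᵐ y ∂μ, ‖y‖ ≤ R) (x : E) :
    Integrable (fun y => exp ⟪x, y⟫) μ := by
  refine .of_bound (continuous_const.inner continuous_id).rexp.aestronglyMeasurable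
    (exp (‖x‖ * R)) ?_
  filter_upwards [hμ] with y hy
  rw [norm_of_nonneg (exp_pos _).le]
  exact exp_inner_le_of_norm_le hy x

theorem norm_integral_exp_inner_smul_le [MeasurableSpace E] {μ : Measure E} {g : E → F}
    (hgC : ∀ᵐ y ∂μ, ‖g y‖ ≤ C) {x : E}
    (hx : Integrable (fun y => exp ⟪x, y⟫) μ) :
    ‖∫ y, exp ⟪x, y⟫ • g y ∂μ‖ ≤ C * ∫ y, exp ⟪x, y⟫ ∂μ := by
  rw [← integral_const_mul]
  refine norm_integral_le_of_norm_le (hx.const_mul C) ?_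
  filter_upwards [hgC] with y hy
  rw [norm_smul, norm_of_nonneg (exp_pos _).le, mul_comm]
  gcongr

theorem hasFDerivAt_exp_inner_smul (y : E) (v : F) (x : E) :
    HasFDerivAt (fun w => exp ⟪w, y⟫ • v) (exp ⟪x, y⟫ • (innerSL ℝ y).smulRight v) x := by
  have h : HasFDerivAt (fun w => exp ⟪w, y⟫) (exp ⟪x, y⟫ • innerSL ℝ y) x := by
    simpa only [innerSL_apply_apply, real_inner_comm y] using (innerSL ℝ y).hasFDerivAt.exp
  convert h.smul_const v using 1
  ext u
  simp [smul_smul]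

theorem norm_integral_exp_inner_smulRight_le [MeasurableSpace E] {μ : Measure E} {g : E → F}
    (hμ : ∀ᵐ y ∂μ, ‖y‖ ≤ R) (hgC : ∀ᵐ y ∂μ, ‖g y‖ ≤ C) {x : E}
    (hx : Integrable (fun y => exp ⟪x, y⟫) μ) :
    ‖∫ y, exp ⟪x, y⟫ • (innerSL ℝ y).smulRight (g y) ∂μ‖ ≤ R * C * ∫ y, exp ⟪x, y⟫ ∂μ := by
  refine norm_integral_exp_inner_smul_le ?_ hx
  filter_upwards [hμ, hgC] with y hy hgy
  rw [ContinuousLinearMap.norm_smulRight_apply, innerSL_apply_norm]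
  exact mul_le_mul hy hgy (norm_nonneg _) ((norm_nonneg _).trans hy)

theorem hasFDerivAt_integral_exp_inner_smul [MeasurableSpace E] [BorelSpace E]
    [SecondCountableTopology E] {μ : Measure E} [IsFiniteMeasure μ] {g : E → F}
    (hμ : ∀ᵐ y ∂μ, ‖y‖ ≤ R) (hg : Continuous g) (hgC : ∀ᵐ y ∂μ, ‖g y‖ ≤ C) (z : E) :
    HasFDerivAt (fun w => ∫ y, exp ⟪w, y⟫ • g y ∂μ)
      (∫ y, exp ⟪z, y⟫ • (innerSL ℝ y).smulRight (g y) ∂μ) z := by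
  have hexp (x : E) : Continuous fun y => exp ⟪x, y⟫ := (continuous_const.inner continuous_id).rexp
  have hg' : Continuous fun y => (innerSL ℝ y).smulRight (g y) :=
    isBoundedBilinearMap_smulRight.continuous.comp ((innerSL ℝ).continuous.prodMk hg)
  refine hasFDerivAt_integral_of_dominated_of_fderiv_le
    (F' := fun x y => exp ⟪x, y⟫ • (innerSL ℝ y).smulRight (g y)) (ball_mem_nhds z one_pos)
    (.of_forall fun x => ((hexp x).smul hg).aestronglyMeasurable)
    ((integrable_exp_inner hμ z).smul_of_top_left
      (memLp_top_of_bound hg.aestronglyMeasurable C hgC))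
    ((hexp z).smul hg').aestronglyMeasurable
    (bound := fun _ => exp ((‖z‖ + 1) * R) * (R * C)) ?_ (integrable_const _) ?_
  · filter_upwards [hμ, hgC] with y hy hgy x hx
    have hR : 0 ≤ R := (norm_nonneg y).trans hy
    rw [norm_smul, norm_of_nonneg (exp_pos _).le, ContinuousLinearMap.norm_smulRight_apply,
      innerSL_apply_norm]
    refine mul_le_mul ?_ (mul_le_mul hy hgy (norm_nonneg _) hR) (by positivity) (exp_pos _).le
    calc exp ⟪x, y⟫ ≤ exp (‖x‖ * R) := exp_inner_le_of_norm_le hy x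
      _ ≤ exp ((‖z‖ + 1) * R) := by gcongr; exact (norm_lt_of_mem_ball hx).le
  · exact .of_forall fun y x _ => hasFDerivAt_exp_inner_smul y (g y) x

end ExpTilt

theorem exists_hasFDerivAt_gammaAttn_norm_le {d : ℕ} {μ : Measure (EuclideanSpace ℝ (Fin d))}
    [IsFiniteMeasure μ] [NeZero μ] {R : ℝ} (hμ : ∀ᵐ y ∂μ, ‖y‖ ≤ R) (z : EuclideanSpace ℝ (Fin d)) :
    ∃ L : EuclideanSpace ℝ (Fin d) →L[ℝ] EuclideanSpace ℝ (Fin d),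
      HasFDerivAt (gammaAttn · μ) L z ∧ ‖L‖ ≤ 2 * R ^ 2 := by
  have hone : ∀ᵐ _ ∂μ, ‖(1 : ℝ)‖ ≤ 1 := .of_forall fun _ => norm_one.le
  have hD := hasFDerivAt_integral_exp_inner_smul hμ continuous_const hone z
  simp only [smul_eq_mul, mul_one] at hD
  have hexp := integrable_exp_inner hμ z
  obtain ⟨L, hL, hLR⟩ := hD.exists_inv_smul_norm_le
    (hasFDerivAt_integral_exp_inner_smul hμ continuous_id hμ z) (integral_exp_pos hexp)
    (norm_integral_exp_inner_smulRight_le hμ hone hexp)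
    (norm_integral_exp_inner_smulRight_le hμ hμ hexp) (norm_integral_exp_inner_smul_le hμ hexp)
  exact ⟨L, hL, hLR.trans_eq (by ring)⟩

theorem stmt_2 {d : ℕ} (R₁ : ℝ)
    (μ : Measure (EuclideanSpace ℝ (Fin d))) [IsProbabilityMeasure μ]
    (hsupp : μ (Metric.closedBall 0 R₁) = 1) :
    (∀ z ∈ Metric.closedBall (0 : EuclideanSpace ℝ (Fin d)) R₁,
        DifferentiableAt ℝ (fun w => gammaAttn w μ) z) ∧
      ∀ z ∈ Metric.closedBall (0 : EuclideanSpace ℝ (Fin d)) R₁,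
        ∀ z' ∈ Metric.closedBall (0 : EuclideanSpace ℝ (Fin d)) R₁,
          ‖gammaAttn z μ - gammaAttn z' μ‖ ≤ 2 * R₁ ^ 2 * ‖z - z'‖ := by
  have hμ : ∀ᵐ y ∂μ, ‖y‖ ≤ R₁ := by
    have := (ae_iff_measure_eq (μ := μ) (p := (· ∈ closedBall 0 R₁))
      measurableSet_closedBall.nullMeasurableSet).2 (by rw [Set.ofPred_mem_eq, hsupp, measure_univ])
    simpa only [mem_closedBall_zero_iff] using this
  choose L hL hLR using exists_hasFDerivAt_gammaAttn_norm_le hμ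
  refine ⟨fun z _ => (hL z).differentiableAt, fun z hz z' hz' => ?_⟩
  exact (convex_closedBall 0 R₁).norm_image_sub_le_of_norm_hasFDerivWithin_le
    (fun x _ => (hL x).hasFDerivWithinAt) (fun x _ => hLR x) hz' hz
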